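/- Cline's formula for g-Drazin inverses: let a, b be elements of a unital Banach algebra such that ab has a g-Drazin inverse. Then ba has a g-Drazin inverse and (ba)^d = b((ab)^d)^2 a. -/

import Mathlib

open Filter Topology

/-- An element of a normed ring is quasinilpotent if `‖a^n‖^(1/n) → 0`. -/
def IsQuasinilpotent {A : Type*} [NormedRing A] (a : A) : Prop :=
  Filter.Tendsto (fun n : ℕ => ‖a ^ n‖ ^ ((1 : ℝ) / n)) Filter.atTop (nhds 0)

/-- `b` is a generalized Drazin inverse of `a`. -/
def IsGDrazinInverse {A : Type*} [NormedRing A] (a b : A) : Prop :=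
  a * b = b * a ∧ b * a * b = b ∧ IsQuasinilpotent (a - a ^ 2 * b)

/-! Put `c = a - a b y a`. The residual `ba - (ba)² (b y² a)` equals `b c`, while the residual
`ab - (ab)² y` equals `c b`; these are quasinilpotent together because the spectra of `bc` and
`cb` agree away from `0`. -/

theorem spectralRadius_mul_comm_le {𝕜 A : Type*} [NormedField 𝕜] [Ring A] [Algebra 𝕜 A]
    (a b : A) : spectralRadius 𝕜 (a * b) ≤ spectralRadius 𝕜 (b * a) := by
  refine iSup₂_le fun k hk => ?_
  rcases eq_or_ne k 0 with rfl | hk0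
  · simp
  · have hk' : k ∈ spectrum 𝕜 (b * a) \ {0} :=
      spectrum.nonzero_mul_comm (𝕜 := 𝕜) a b ▸ ⟨hk, hk0⟩
    exact le_iSup₂ (f := fun k (_ : k ∈ spectrum 𝕜 (b * a)) => (‖k‖₊ : ENNReal)) k hk'.1

theorem spectralRadius_mul_comm {𝕜 A : Type*} [NormedField 𝕜] [Ring A] [Algebra 𝕜 A]
    (a b : A) : spectralRadius 𝕜 (a * b) = spectralRadius 𝕜 (b * a) :=
  le_antisymm (spectralRadius_mul_comm_le a b) (spectralRadius_mul_comm_le b a)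

theorem isQuasinilpotent_iff_spectralRadius_eq_zero {A : Type*} [NormedRing A]
    [NormedAlgebra ℂ A] [CompleteSpace A] (x : A) :
    IsQuasinilpotent x ↔ spectralRadius ℂ x = 0 := by
  have gelfand := spectrum.pow_nnnorm_pow_one_div_tendsto_nhds_spectralRadius x
  have : IsQuasinilpotent x ↔
      Tendsto (fun n : ℕ => (‖x ^ n‖₊ : ENNReal) ^ ((1 : ℝ) / n)) atTop (𝓝 0) := by
    have hcoe (n : ℕ) : (‖x ^ n‖₊ : ENNReal) ^ ((1 : ℝ) / n) = ↑(‖x ^ n‖₊ ^ ((1 : ℝ) / n)) :=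
      (ENNReal.coe_rpow_of_nonneg _ (by positivity)).symm
    simp_rw [hcoe, ← ENNReal.coe_zero, ENNReal.tendsto_coe, ← NNReal.tendsto_coe]
    simp [IsQuasinilpotent]
  rw [this]
  exact ⟨fun h => tendsto_nhds_unique gelfand h, fun h => by simpa [h] using gelfand⟩

theorem IsQuasinilpotent.mul_comm {A : Type*} [NormedRing A] [NormedAlgebra ℂ A]
    [CompleteSpace A] {x y : A} (h : IsQuasinilpotent (x * y)) : IsQuasinilpotent (y * x) := by
  rwa [isQuasinilpotent_iff_spectralRadius_eq_zero, spectralRadius_mul_comm,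
    ← isQuasinilpotent_iff_spectralRadius_eq_zero]

section Ring

variable {R : Type*} [Ring R]

theorem sq_mul_sq_of_commute {p y : R} (hc : Commute p y) (hy : y * p * y = y) :
    p ^ 2 * y ^ 2 = p * y :=
  calc p ^ 2 * y ^ 2 = p * (y * p * y) := by rw [← hc.mul_pow, sq]; simp only [mul_assoc]
    _ = p * y := by rw [hy]

variable {a b y : R}

theorem commute_mul_swap_cline (hc : Commute (a * b) y) : Commute (b * a) (b * y ^ 2 * a) :=
  calc b * a * (b * y ^ 2 * a) = b * (a * b * y ^ 2) * a := by simp only [mul_assoc]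
    _ = b * (y ^ 2 * (a * b)) * a := by rw [(hc.pow_right 2).eq]
    _ = b * y ^ 2 * a * (b * a) := by simp only [mul_assoc]

theorem cline_mul_mul_cline (hc : Commute (a * b) y) (hy : y * (a * b) * y = y) :
    b * y ^ 2 * a * (b * a) * (b * y ^ 2 * a) = b * y ^ 2 * a :=
  calc b * y ^ 2 * a * (b * a) * (b * y ^ 2 * a) = b * (y ^ 2 * ((a * b) ^ 2 * y ^ 2)) * a := by
        simp only [sq, mul_assoc]
    _ = b * (y * (y * (a * b) * y)) * a := by
        rw [sq_mul_sq_of_commute hc hy, sq]; simp only [mul_assoc]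
    _ = b * y ^ 2 * a := by rw [hy, sq]

theorem sub_sq_mul_cline (hc : Commute (a * b) y) (hy : y * (a * b) * y = y) :
    b * a - (b * a) ^ 2 * (b * y ^ 2 * a) = b * (a - a * b * y * a) := by
  have : (b * a) ^ 2 * (b * y ^ 2 * a) = b * ((a * b) ^ 2 * y ^ 2) * a := by
    simp only [sq, mul_assoc]
  rw [this, sq_mul_sq_of_commute hc hy]
  simp only [mul_sub, mul_assoc]

theorem sub_mul_cline (hc : Commute (a * b) y) :
    (a - a * b * y * a) * b = a * b - (a * b) ^ 2 * y := by
  have : a * b * y * a * b = a * b * (y * (a * b)) := by simp only [mul_assoc]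
  rw [sub_mul, this, ← hc.eq, sq, mul_assoc (a * b) (a * b) y]

end Ring

theorem IsGDrazinInverse.cline {A : Type*} [NormedRing A] [NormedAlgebra ℂ A] [CompleteSpace A]
    {a b y : A} (h : IsGDrazinInverse (a * b) y) : IsGDrazinInverse (b * a) (b * y ^ 2 * a) := by
  obtain ⟨hc, hy, hq⟩ := h
  refine ⟨(commute_mul_swap_cline hc).eq, cline_mul_mul_cline hc hy, ?_⟩
  rw [sub_sq_mul_cline hc hy]
  exact IsQuasinilpotent.mul_comm (sub_mul_cline hc ▸ hq)

theorem stmt17 {A : Type*} [NormedRing A] [NormedAlgebra ℂ A] [CompleteSpace A]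
    (a b : A) (h : ∃ y, IsGDrazinInverse (a * b) y) :
    (∃ z, IsGDrazinInverse (b * a) z) ∧
      ∀ y, IsGDrazinInverse (a * b) y → IsGDrazinInverse (b * a) (b * y ^ 2 * a) := by
  obtain ⟨y, hy⟩ := h
  exact ⟨⟨_, hy.cline⟩, fun _ => IsGDrazinInverse.cline⟩
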